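/- For all natural n ≥ 16, with xₙ := √(n - 3 + 4/n), tₙ := 1/xₙ, one has P(f_{n,tₙ}·ε ≥ xₙ) < M⁼(xₙ), where M⁼(x) := sup_{j∈ℕ} P((ε₁+⋯+ε_j)/√j ≥ x) and f_{n,t}·ε := √((1-t²)/n)(ε₁+⋯+εₙ) + t·ε_{n+1}. -/

import Mathlib

/-!
On the almost sure event that every `εᵢ` is `±1`, both probabilities count sign patterns. Let `k`
be the number of minus signs among `ε₁, …, εₙ`. The choice `n xₙ² = n² - 3n + 4` makes
`f_{n,tₙ}·ε ≥ xₙ` equivalent to `ε_{n+1} = 1` and `k ≤ 1`, an event of probability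
`(n+1)/2^{n+1}`.

In place of the central limit theorem we compare with a single term of `M⁼`: for `j = 4n + 12`, at
most `n + 6` minus signs among `ε₁, …, ε_j` force `(ε₁ + ⋯ + ε_j)/√j ≥ xₙ`, so
`P(e_j·ε ≥ xₙ) ≥ 2^{-j} ∑_{k ≤ n+6} C(j, k)`. That this beats `(n+1)/2^{n+1}` follows by induction
on `n ≥ 16`. The step compares the binomial sums term by term, using
`C(j+4, k+1)/C(j, k) = (j+1)⋯(j+4) / ((k+1)(j+1-k)(j+2-k)(j+3-k))` and AM–GM on the denominator.
-/

open MeasureTheory ProbabilityTheory Filter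

/-- The standard normal tail function. -/
noncomputable def normalTail (x : ℝ) : ℝ :=
  ∫ u in Set.Ici x, (Real.sqrt (2 * Real.pi))⁻¹ * Real.exp (-u ^ 2 / 2)

/-- `ε` is a sequence of independent Rademacher random variables on `(Ω, μ)`. -/
def IsRademacherSeq {Ω : Type*} [MeasurableSpace Ω] (μ : Measure Ω) (ε : ℕ → Ω → ℝ) : Prop :=
  (∀ i, Measurable (ε i)) ∧ iIndepFun ε μ ∧
    ∀ i, μ {ω | ε i ω = 1} = 1/2 ∧ μ {ω | ε i ω = -1} = 1/2

/-- `P(a·ε ≥ x)`, where `a·ε` is the a.s. limit of the partial sums `∑_{i<n} aᵢ εᵢ`. -/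
noncomputable def tailProb {Ω : Type*} [MeasurableSpace Ω] (μ : Measure Ω) (ε : ℕ → Ω → ℝ)
    (a : ℕ → ℝ) (x : ℝ) : ℝ :=
  (μ {ω | ∃ s, x ≤ s ∧
      Tendsto (fun n => ∑ i ∈ Finset.range n, a i * ε i ω) atTop (nhds s)}).toReal

/-- `P(eₙ·ε ≥ x) = P((ε₁+⋯+εₙ)/√n ≥ x)`. -/
noncomputable def eqTail {Ω : Type*} [MeasurableSpace Ω] (μ : Measure Ω) (ε : ℕ → Ω → ℝ)
    (n : ℕ) (x : ℝ) : ℝ :=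
  (μ {ω | x ≤ (∑ i ∈ Finset.range n, ε i ω) / Real.sqrt n}).toReal

/-- `P(f_{n,t}·ε ≥ x)` where `f_{n,t}·ε = √((1-t²)/n)(ε₁+⋯+εₙ) + t ε_{n+1}`. -/
noncomputable def fTail {Ω : Type*} [MeasurableSpace Ω] (μ : Measure Ω) (ε : ℕ → Ω → ℝ)
    (n : ℕ) (t x : ℝ) : ℝ :=
  (μ {ω | x ≤ Real.sqrt ((1 - t ^ 2) / n) * (∑ i ∈ Finset.range n, ε i ω) + t * ε n ω}).toReal

/-- The maximal tail `M(x)`: supremum of `P(a·ε ≥ x)` over the unit sphere of `ℓ²`. -/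
noncomputable def Mtail {Ω : Type*} [MeasurableSpace Ω] (μ : Measure Ω) (ε : ℕ → Ω → ℝ)
    (x : ℝ) : ℝ :=
  sSup {p | ∃ a : ℕ → ℝ, (∑' i, (a i) ^ 2) = 1 ∧ p = tailProb μ ε a x}

/-- `M⁼(x) = sup_{n ≥ 1} P(eₙ·ε ≥ x)`. -/
noncomputable def Meq {Ω : Type*} [MeasurableSpace Ω] (μ : Measure Ω) (ε : ℕ → Ω → ℝ)
    (x : ℝ) : ℝ :=
  sSup {p | ∃ n : ℕ, 1 ≤ n ∧ p = eqTail μ ε n x}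

/-- `Mₙ(x)`: supremum over unit vectors supported on the first `n` coordinates. -/
noncomputable def Mn {Ω : Type*} [MeasurableSpace Ω] (μ : Measure Ω) (ε : ℕ → Ω → ℝ)
    (n : ℕ) (x : ℝ) : ℝ :=
  sSup {p | ∃ a : ℕ → ℝ, (∑' i, (a i) ^ 2) = 1 ∧ (∀ i, n ≤ i → a i = 0) ∧
    p = tailProb μ ε a x}

/-- `M⁼ₙ(x) = max_{1 ≤ j ≤ n} P(e_j·ε ≥ x)`. -/
noncomputable def Meqn {Ω : Type*} [MeasurableSpace Ω] (μ : Measure Ω) (ε : ℕ → Ω → ℝ)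
    (n : ℕ) (x : ℝ) : ℝ :=
  sSup {p | ∃ j : ℕ, 1 ≤ j ∧ j ≤ n ∧ p = eqTail μ ε j x}

open Finset

lemma mul_pow_three_le_pow_four (u v : ℝ) : 256 * (u * v ^ 3) ≤ (u + 3 * v) ^ 4 := by
  nlinarith [mul_nonneg (sq_nonneg (u - v)) (add_nonneg (sq_nonneg (u + 7 * v)) (sq_nonneg v))]

lemma Nat.choose_add_four_succ_mul (k d : ℕ) :
    (k + d + 4).choose (k + 1) * ((k + 1) * (d + 1) * (d + 2) * (d + 3)) =
      (k + d).choose k * ((k + d + 1) * (k + d + 2) * (k + d + 3) * (k + d + 4)) := by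
  have h1 := Nat.choose_mul_succ_eq (k + d) k
  have h2 := Nat.choose_mul_succ_eq (k + d + 1) k
  have h3 := Nat.choose_mul_succ_eq (k + d + 2) k
  have h4 := Nat.add_one_mul_choose_eq (k + d + 3) k
  rw [show k + d + 1 - k = d + 1 by omega] at h1
  rw [show k + d + 1 + 1 - k = d + 2 by omega] at h2
  rw [show k + d + 2 + 1 - k = d + 3 by omega] at h3
  zify at *
  linear_combination (-(d + 1 : ℤ) * (d + 2) * (d + 3)) * h4
    - ((k + d + 4 : ℤ) * (d + 1) * (d + 2)) * h3 - ((k + d + 4 : ℤ) * (k + d + 3) * (d + 1)) * h2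
    - ((k + d + 4 : ℤ) * (k + d + 3) * (k + d + 2)) * h1

lemma Nat.choose_le_choose_add_four_succ (j k : ℕ) :
    256 * ((j + 1) * (j + 2) * (j + 4)) * j.choose k ≤
      27 * (j + 3) ^ 3 * (j + 4).choose (k + 1) := by
  rcases lt_or_ge j k with hjk | hkj
  · simp [Nat.choose_eq_zero_of_lt hjk]
  obtain ⟨d, rfl⟩ := Nat.exists_eq_add_of_le hkj
  have key : ((k + d + 4).choose (k + 1) : ℝ) * ((k + 1) * (d + 1) * (d + 2) * (d + 3)) =
      (k + d).choose k * ((k + d + 1) * (k + d + 2) * (k + d + 3) * (k + d + 4)) := by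
    exact_mod_cast Nat.choose_add_four_succ_mul k d
  have amgm := mul_pow_three_le_pow_four (3 * (k + 1)) (d + 2)
  have hD : 256 * ((k + 1) * (d + 1) * (d + 2) * (d + 3) : ℝ) ≤ 27 * (k + d + 3) ^ 4 := by
    nlinarith [sq_nonneg ((d : ℝ) + 2)]
  have hC : (0 : ℝ) ≤ (k + d + 4).choose (k + 1) := by positivity
  suffices h : (256 * ((k + d + 1) * (k + d + 2) * (k + d + 4)) * (k + d).choose k : ℝ) ≤
      27 * (k + d + 3) ^ 3 * (k + d + 4).choose (k + 1) by exact_mod_cast h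
  have hpos : (0 : ℝ) < k + d + 3 := by positivity
  refine le_of_mul_le_mul_right ?_ hpos
  nlinarith [mul_le_mul_of_nonneg_right hD hC]

namespace Finset

lemma card_filter_powerset_card_le {α : Type*} (s : Finset α) (K : ℕ) :
    #{t ∈ s.powerset | #t ≤ K} = ∑ k ∈ range (K + 1), (#s).choose k := by
  classical
  rw [card_eq_sum_card_fiberwise (f := card) (t := range (K + 1))]
  · refine sum_congr rfl fun k hk => ?_
    rw [← card_powersetCard]
    congr 1
    ext t
    simp only [mem_filter, mem_powerset, mem_powersetCard]
    have := mem_range.1 hk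
    constructor
    · rintro ⟨⟨hts, -⟩, rfl⟩; exact ⟨hts, rfl⟩
    · rintro ⟨hts, rfl⟩; exact ⟨⟨hts, by omega⟩, rfl⟩
  · intro t ht
    simp only [coe_filter, Set.mem_ofPred_eq] at ht
    simpa [Nat.lt_succ_iff] using ht.2

end Finset

lemma eight_mul_choose_le {n : ℕ} (hn : 7 ≤ n) (k : ℕ) :
    8 * (n + 2) * (4 * n + 12).choose k ≤ (n + 1) * (4 * n + 16).choose (k + 1) := by
  have hpoly : 27 * (n + 2) * (4 * n + 15) ^ 3 ≤
      32 * (n + 1) * ((4 * n + 13) * (4 * n + 14) * (4 * n + 16)) := by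
    obtain ⟨m, rfl⟩ := Nat.exists_eq_add_of_le hn
    ring_nf
    omega
  have h := Nat.choose_le_choose_add_four_succ (4 * n + 12) k
  refine le_of_mul_le_mul_left (a := 32 * ((4 * n + 13) * (4 * n + 14) * (4 * n + 16))) ?_
    (by positivity)
  calc 32 * ((4 * n + 13) * (4 * n + 14) * (4 * n + 16)) * (8 * (n + 2) * (4 * n + 12).choose k)
      = (n + 2) * (256 * ((4 * n + 12 + 1) * (4 * n + 12 + 2) * (4 * n + 12 + 4)) *
          (4 * n + 12).choose k) := by ring
    _ ≤ (n + 2) * (27 * (4 * n + 12 + 3) ^ 3 * (4 * n + 12 + 4).choose (k + 1)) :=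
        Nat.mul_le_mul_left _ h
    _ = 27 * (n + 2) * (4 * n + 15) ^ 3 * (4 * n + 16).choose (k + 1) := by ring
    _ ≤ 32 * (n + 1) * ((4 * n + 13) * (4 * n + 14) * (4 * n + 16)) *
          (4 * n + 16).choose (k + 1) := Nat.mul_le_mul_right _ hpoly
    _ = _ := by ring

lemma eight_mul_sum_choose_le {n : ℕ} (hn : 7 ≤ n) :
    8 * (n + 2) * ∑ k ∈ range (n + 7), (4 * n + 12).choose k ≤
      (n + 1) * ∑ k ∈ range (n + 8), (4 * n + 16).choose k := by
  calc 8 * (n + 2) * ∑ k ∈ range (n + 7), (4 * n + 12).choose k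
      ≤ ∑ k ∈ range (n + 7), (n + 1) * (4 * n + 16).choose (k + 1) := by
        rw [Finset.mul_sum]
        exact Finset.sum_le_sum fun k _ => eight_mul_choose_le hn k
    _ ≤ ∑ k ∈ range (n + 7), (n + 1) * (4 * n + 16).choose (k + 1) +
          (n + 1) * (4 * n + 16).choose 0 := Nat.le_add_right _ _
    _ = _ := by rw [Finset.mul_sum, Finset.sum_range_succ' _ (n + 7)]

lemma succ_mul_two_pow_lt_sum_choose {n : ℕ} (hn : 16 ≤ n) :
    (n + 1) * 2 ^ (3 * n + 11) < ∑ k ∈ range (n + 7), (4 * n + 12).choose k := by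
  induction n, hn using Nat.le_induction with
  | base => decide +kernel
  | succ n hn ih =>
    have hstep := eight_mul_sum_choose_le (n := n) (by omega)
    refine Nat.lt_of_mul_lt_mul_left (a := n + 1) ?_
    calc (n + 1) * ((n + 1 + 1) * 2 ^ (3 * (n + 1) + 11))
        = 8 * (n + 2) * ((n + 1) * 2 ^ (3 * n + 11)) := by ring
      _ < 8 * (n + 2) * ∑ k ∈ range (n + 7), (4 * n + 12).choose k :=
        Nat.mul_lt_mul_of_pos_left ih (by positivity)
      _ ≤ _ := hstep

lemma succ_mul_half_pow_lt_sum_choose_mul {n : ℕ} (hn : 16 ≤ n) :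
    ((n : ℝ) + 1) * (1 / 2) ^ (n + 1) <
      (∑ k ∈ range (n + 7), (4 * n + 12).choose k : ℝ) * (1 / 2) ^ (4 * n + 12) := by
  have h : ((n + 1) * 2 ^ (3 * n + 11) : ℝ) < ∑ k ∈ range (n + 7), (4 * n + 12).choose k := by
    exact_mod_cast succ_mul_two_pow_lt_sum_choose hn
  push_cast at h
  have hpow : (2 : ℝ) ^ (4 * n + 12) = 2 ^ (3 * n + 11) * 2 ^ (n + 1) := by
    rw [← pow_add]; ring_nf
  rw [one_div, inv_pow, inv_pow, ← div_eq_mul_inv, ← div_eq_mul_inv,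
    div_lt_div_iff₀ (by positivity) (by positivity), hpow, ← mul_assoc]
  exact mul_lt_mul_of_pos_right h (by positivity)


section minusSet

variable {Ω : Type*} {ε : ℕ → Ω → ℝ}

noncomputable def minusSet (ε : ℕ → Ω → ℝ) (m : ℕ) (ω : Ω) : Finset ℕ :=
  {i ∈ range m | ε i ω = -1}

lemma minusSet_succ (ε : ℕ → Ω → ℝ) (m : ℕ) (ω : Ω) :
    minusSet ε (m + 1) ω =
      if ε m ω = -1 then insert m (minusSet ε m ω) else minusSet ε m ω := by
  rw [minusSet, range_add_one, filter_insert, minusSet]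

lemma minusSet_eq_iff {m : ℕ} {s : Finset ℕ} (hs : s ⊆ range m) {ω : Ω} :
    minusSet ε m ω = s ↔ ∀ i ∈ range m, (ε i ω = -1 ↔ i ∈ s) := by
  constructor
  · rintro rfl i hi
    simp [minusSet, mem_range.1 hi]
  · intro h
    ext i
    simp only [minusSet, mem_filter]
    exact ⟨fun ⟨hi, hεi⟩ => (h i hi).1 hεi, fun his => ⟨hs his, (h i (hs his)).2 his⟩⟩

lemma setOf_minusSet_eq {m : ℕ} {s : Finset ℕ} (hs : s ⊆ range m) :
    {ω | minusSet ε m ω = s} = ⋂ i ∈ range m, ε i ⁻¹' (if i ∈ s then {-1} else {-1}ᶜ) := by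
  ext ω
  simp only [Set.mem_ofPred_eq, minusSet_eq_iff hs, Set.mem_iInter, Set.mem_preimage]
  refine forall₂_congr fun i _ => ?_
  split_ifs with h <;> simp [h]

lemma sum_range_eq_sub_two_mul_card_minusSet {ω : Ω} (hω : ∀ i, ε i ω = 1 ∨ ε i ω = -1)
    (m : ℕ) : ∑ i ∈ range m, ε i ω = m - 2 * #(minusSet ε m ω) := by
  rw [minusSet, natCast_card_filter, mul_sum, ← Finset.card_range m, ← nsmul_one, ← sum_const,
    card_range, ← sum_sub_distrib]
  refine sum_congr rfl fun i _ => ?_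
  rcases hω i with h | h <;> norm_num [h]

end minusSet

namespace IsRademacherSeq

variable {Ω : Type*} [MeasurableSpace Ω] {μ : Measure Ω} {ε : ℕ → Ω → ℝ}

lemma measure_preimage_neg_one (hε : IsRademacherSeq μ ε) (i : ℕ) : μ (ε i ⁻¹' {-1}) = 2⁻¹ := by
  rw [← one_div]; exact (hε.2.2 i).2

lemma measure_preimage_one (hε : IsRademacherSeq μ ε) (i : ℕ) : μ (ε i ⁻¹' {1}) = 2⁻¹ := by
  rw [← one_div]; exact (hε.2.2 i).1

lemma measurableSet_minusSet_eq (hε : IsRademacherSeq μ ε) {m : ℕ} {s : Finset ℕ}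
    (hs : s ⊆ range m) : MeasurableSet {ω | minusSet ε m ω = s} := by
  rw [setOf_minusSet_eq hs]
  exact .biInter (Set.to_countable _) fun i _ => hε.1 i (by split_ifs <;> measurability)

variable [IsProbabilityMeasure μ]

lemma measure_preimage_neg_one_compl (hε : IsRademacherSeq μ ε) (i : ℕ) :
    μ (ε i ⁻¹' {-1}ᶜ) = 2⁻¹ := by
  rw [Set.preimage_compl, measure_compl (hε.1 i (measurableSet_singleton _)) (measure_ne_top _ _),
    measure_univ, hε.measure_preimage_neg_one, ENNReal.one_sub_inv_two]

lemma ae_eq_one_or_eq_neg_one (hε : IsRademacherSeq μ ε) :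
    ∀ᵐ ω ∂μ, ∀ i, ε i ω = 1 ∨ ε i ω = -1 := by
  refine ae_all_iff.2 fun i => ?_
  have hone : MeasurableSet (ε i ⁻¹' {1}) := hε.1 i (measurableSet_singleton _)
  have hneg : MeasurableSet (ε i ⁻¹' {-1}) := hε.1 i (measurableSet_singleton _)
  have hdisj : Disjoint (ε i ⁻¹' {1}) (ε i ⁻¹' {-1}) :=
    Disjoint.preimage _ (Set.disjoint_singleton.2 (by norm_num))
  change ε i ⁻¹' {1} ∪ ε i ⁻¹' {-1} ∈ ae μ
  rw [mem_ae_iff, prob_compl_eq_zero_iff (hone.union hneg), measure_union hdisj hneg,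
    hε.measure_preimage_one, hε.measure_preimage_neg_one, ENNReal.inv_two_add_inv_two]

lemma measure_minusSet_eq (hε : IsRademacherSeq μ ε) {m : ℕ} {s : Finset ℕ}
    (hs : s ⊆ range m) : μ {ω | minusSet ε m ω = s} = 2⁻¹ ^ m := by
  rw [setOf_minusSet_eq hs, hε.2.1.measure_inter_preimage_eq_mul (range m)
    (sets := fun i => if i ∈ s then {-1} else {-1}ᶜ) fun i _ => by split_ifs <;> measurability]
  refine (prod_eq_pow_card fun i _ => ?_).trans (by rw [card_range])
  split_ifs
  · exact hε.measure_preimage_neg_one i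
  · exact hε.measure_preimage_neg_one_compl i

lemma measure_minusSet_mem (hε : IsRademacherSeq μ ε) {m : ℕ} (T : Finset (Finset ℕ))
    (hT : ∀ s ∈ T, s ⊆ range m) : μ {ω | minusSet ε m ω ∈ T} = #T * 2⁻¹ ^ m := by
  change μ (minusSet ε m ⁻¹' T) = _
  rw [← sum_measure_preimage_singleton T fun s hs => hε.measurableSet_minusSet_eq (hT s hs),
    ← nsmul_eq_mul]
  exact sum_eq_card_nsmul fun s hs => hε.measure_minusSet_eq (hT s hs)

end IsRademacherSeq

lemma le_sqrt_mul_add_inv_mul_iff {n : ℕ} (hn : 3 ≤ n) {x : ℝ} (hx0 : 0 < x)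
    (hx : n * x ^ 2 = n ^ 2 - 3 * n + 4) (k : ℕ) {e : ℝ} (he : e = 1 ∨ e = -1) :
    x ≤ √((1 - (1 / x) ^ 2) / n) * (n - 2 * k) + 1 / x * e ↔ e = 1 ∧ k ≤ 1 := by
  have hn' : (3 : ℝ) ≤ n := by exact_mod_cast hn
  have hnx : 0 < (n : ℝ) * x := by positivity
  have hcoeff : √((1 - (1 / x) ^ 2) / n) = (n - 2) / (n * x) := by
    rw [← Real.sqrt_sq (div_nonneg (by linarith) hnx.le)]
    congr 1
    field_simp
    linear_combination hx
  rw [hcoeff, ← mul_le_mul_iff_right₀ hnx,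
    show (n : ℝ) * x * ((n - 2) / (n * x) * (n - 2 * k) + 1 / x * e) =
      (n - 2) * (n - 2 * k) + n * e by field_simp, show (n : ℝ) * x * x = n * x ^ 2 by ring, hx]
  rcases he with rfl | rfl
  · simp only [true_and]
    constructor
    · intro h
      have : (k : ℝ) ≤ 1 := by nlinarith
      exact_mod_cast this
    · intro hk
      have : (k : ℝ) ≤ 1 := by exact_mod_cast hk
      nlinarith
  · simp only [show (-1 : ℝ) ≠ 1 by norm_num, false_and, iff_false, not_le]
    nlinarith [(Nat.cast_nonneg k : (0 : ℝ) ≤ k)]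

lemma mul_sqrt_le_of_mul_sq_eq {n : ℕ} (hn : 3 ≤ n) {x : ℝ} (hx0 : 0 ≤ x)
    (hx : n * x ^ 2 = n ^ 2 - 3 * n + 4) :
    x * √((4 * n + 12 : ℕ) : ℝ) ≤ ((4 * n + 12 : ℕ) : ℝ) - 2 * ((n + 6 : ℕ) : ℝ) := by
  have hn' : (3 : ℝ) ≤ n := by exact_mod_cast hn
  push_cast
  have hsq : (x * √(4 * n + 12 : ℝ)) ^ 2 = x ^ 2 * (4 * n + 12) := by
    rw [mul_pow, Real.sq_sqrt (x := 4 * n + 12) (by positivity)]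
  refine (pow_le_pow_iff_left₀ (by positivity) (by linarith) two_ne_zero).1 ?_
  rw [hsq]
  nlinarith

section

variable {Ω : Type*} [MeasurableSpace Ω] {μ : Measure Ω} [IsProbabilityMeasure μ]
  {ε : ℕ → Ω → ℝ}

lemma fTail_eq_succ_mul_half_pow (hε : IsRademacherSeq μ ε) {n : ℕ} (hn : 3 ≤ n) {x : ℝ}
    (hx0 : 0 < x) (hx : n * x ^ 2 = n ^ 2 - 3 * n + 4) :
    fTail μ ε n (1 / x) x = (n + 1) * (1 / 2) ^ (n + 1) := by
  set T := {s ∈ (range n).powerset | #s ≤ 1}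
  have hT : ∀ s ∈ T, s ⊆ range (n + 1) := fun s hs =>
    (mem_powerset.1 (mem_filter.1 hs).1).trans (range_subset_range.2 n.le_succ)
  have hcard : #T = n + 1 := by
    rw [card_filter_powerset_card_le, card_range, sum_range_succ, sum_range_one,
      Nat.choose_zero_right, Nat.choose_one_right, add_comm]
  have hevent : {ω | x ≤ √((1 - (1 / x) ^ 2) / n) * (∑ i ∈ range n, ε i ω) + 1 / x * ε n ω}
      =ᵐ[μ] {ω | minusSet ε (n + 1) ω ∈ T} := by
    rw [eventuallyEq_set]
    filter_upwards [hε.ae_eq_one_or_eq_neg_one] with ω hω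
    rw [sum_range_eq_sub_two_mul_card_minusSet hω, le_sqrt_mul_add_inv_mul_iff hn hx0 hx _ (hω n),
      minusSet_succ]
    rcases hω n with h | h
    · have hsub : minusSet ε n ω ⊆ range n := filter_subset _ _
      simp [h, T, hsub, show (1 : ℝ) ≠ -1 by norm_num]
    · simp [h, T, insert_subset_iff, show (-1 : ℝ) ≠ 1 by norm_num]
  rw [fTail, measure_congr hevent, hε.measure_minusSet_mem T hT, hcard, ENNReal.toReal_mul,
    ENNReal.toReal_natCast, ENNReal.toReal_pow, ENNReal.toReal_inv, ENNReal.toReal_ofNat]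
  norm_num

lemma sum_choose_mul_le_eqTail (hε : IsRademacherSeq μ ε) {j K : ℕ} (hj : 0 < j) {x : ℝ}
    (hx : x * √j ≤ j - 2 * K) :
    (∑ k ∈ range (K + 1), j.choose k : ℝ) * (1 / 2) ^ j ≤ eqTail μ ε j x := by
  set T := {s ∈ (range j).powerset | #s ≤ K}
  have hT : ∀ s ∈ T, s ⊆ range j := fun s hs => mem_powerset.1 (mem_filter.1 hs).1
  have hevent : {ω | minusSet ε j ω ∈ T} ≤ᵐ[μ]
      {ω | x ≤ (∑ i ∈ range j, ε i ω) / √j} := by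
    filter_upwards [hε.ae_eq_one_or_eq_neg_one] with ω hω hmem
    have hK : (#(minusSet ε j ω) : ℝ) ≤ K := by exact_mod_cast (mem_filter.1 hmem).2
    change x ≤ (∑ i ∈ range j, ε i ω) / √j
    rw [sum_range_eq_sub_two_mul_card_minusSet hω,
      le_div_iff₀ (Real.sqrt_pos.2 (by exact_mod_cast hj))]
    linarith
  calc (∑ k ∈ range (K + 1), j.choose k : ℝ) * (1 / 2) ^ j
      = (μ {ω | minusSet ε j ω ∈ T}).toReal := by
        rw [hε.measure_minusSet_mem T hT, card_filter_powerset_card_le, card_range,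
          ENNReal.toReal_mul, ENNReal.toReal_natCast, ENNReal.toReal_pow, ENNReal.toReal_inv,
          ENNReal.toReal_ofNat]
        norm_num
    _ ≤ eqTail μ ε j x := ENNReal.toReal_mono (measure_ne_top _ _) (measure_mono_ae hevent)

lemma eqTail_le_Meq {j : ℕ} (hj : 1 ≤ j) (x : ℝ) : eqTail μ ε j x ≤ Meq μ ε x :=
  le_csSup ⟨1, by rintro _ ⟨m, -, rfl⟩; exact measureReal_le_one⟩ ⟨j, hj, rfl⟩

end

theorem rademacher_zhubr_lt_Meq {Ω : Type*} [MeasurableSpace Ω] (μ : MeasureTheory.Measure Ω)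
    [MeasureTheory.IsProbabilityMeasure μ] (ε : ℕ → Ω → ℝ) (hε : IsRademacherSeq μ ε)
    (n : ℕ) (hn : 16 ≤ n) :
    fTail μ ε n (1 / Real.sqrt ((n : ℝ) - 3 + 4 / n)) (Real.sqrt ((n : ℝ) - 3 + 4 / n)) <
      Meq μ ε (Real.sqrt ((n : ℝ) - 3 + 4 / n)) := by
  have hn' : (16 : ℝ) ≤ n := by exact_mod_cast hn
  have harg : 0 < (n : ℝ) - 3 + 4 / n := by
    have : (0 : ℝ) ≤ 4 / n := by positivity
    linarith
  set x := √((n : ℝ) - 3 + 4 / n)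
  have hx0 : 0 < x := Real.sqrt_pos.2 harg
  have hx : n * x ^ 2 = n ^ 2 - 3 * n + 4 := by
    rw [Real.sq_sqrt harg.le]
    field_simp
  calc fTail μ ε n (1 / x) x = (n + 1) * (1 / 2) ^ (n + 1) :=
      fTail_eq_succ_mul_half_pow hε (by omega) hx0 hx
    _ < (∑ k ∈ range (n + 7), (4 * n + 12).choose k : ℝ) * (1 / 2) ^ (4 * n + 12) :=
      succ_mul_half_pow_lt_sum_choose_mul hn
    _ ≤ eqTail μ ε (4 * n + 12) x :=
      sum_choose_mul_le_eqTail hε (by omega) (mul_sqrt_le_of_mul_sq_eq (by omega) hx0.le hx)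
    _ ≤ Meq μ ε x := eqTail_le_Meq (by omega) x
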